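/- arXiv:1604.04947 — 4 statements merged into one kernel-verified Lean document; each statement's English description precedes it below -/
import Mathlib

section
/- For every α ∈ k, n ∈ ℕ, the operators on sequences satisfy (L − α) ∘ Dⁿ − Dⁿ ∘ (L − α) = D^(n−1), where L is the left shift, Dⁿ is the adjoint of the n-th divided derivative, and D^(−1) = 0. -/
/-!
Writing `A = L - α`, the scalar part commutes with `Dⁿ`, so the identity reduces to
`L Dⁿ - Dⁿ L = Dⁿ⁻¹`. Evaluated at `i` this is Pascal's rule
`C(i+1, n) = C(i, n) + C(i, n-1)`, once one notes that `C(i, n) • s_{i-n+1}` may be read as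
`C(i, n) • s_{i+1-n}` because both vanish for `i < n`.
-/

section AdjointDividedDerivative

variable {M : Type*}

-- The truncated `i - m` is harmless because `C(i, m) = 0` for `i < m`.
def adjDivDeriv [AddCommMonoid M] (m : ℕ) (t : ℕ → M) : ℕ → M := fun i => i.choose m • t (i - m)

lemma adjDivDeriv_zero [AddCommMonoid M] (t : ℕ → M) : adjDivDeriv 0 t = t := by
  funext i
  simp [adjDivDeriv]

lemma adjDivDeriv_shift [AddCommMonoid M] (m i : ℕ) (t : ℕ → M) :
    adjDivDeriv (m + 1) (fun j => t (j + 1)) i = i.choose (m + 1) • t (i - m) := by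
  rcases le_or_gt (m + 1) i with hle | hlt
  · simp only [adjDivDeriv]
    congr 2
    omega
  · simp [adjDivDeriv, Nat.choose_eq_zero_of_lt hlt]

lemma adjDivDeriv_succ_apply_succ_sub_adjDivDeriv_shift [AddCommGroup M] (m i : ℕ) (t : ℕ → M) :
    adjDivDeriv (m + 1) t (i + 1) - adjDivDeriv (m + 1) (fun j => t (j + 1)) i =
      adjDivDeriv m t i := by
  rw [adjDivDeriv_shift, adjDivDeriv, adjDivDeriv, Nat.add_sub_add_right, Nat.choose_succ_succ',
    add_smul, add_sub_cancel_right]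

end AdjointDividedDerivative

/-- `(L − α) ∘ Dⁿ − Dⁿ ∘ (L − α) = D^(n−1)` on sequences, where `L` is the
left shift, `Dⁿ(s)ᵢ = C(i,n) • s_{i−n}`, and `D^(−1) = 0`. -/
theorem stmt_9 (k M : Type*) [CommRing k] [AddCommGroup M] [Module k M]
    (α : k) (n : ℕ) (s : ℕ → M)
    (A : (ℕ → M) → (ℕ → M)) (hA : ∀ (t : ℕ → M) (i : ℕ), A t i = t (i + 1) - α • t i)
    (D : ℕ → (ℕ → M) → (ℕ → M))
    (hD : ∀ (m : ℕ) (t : ℕ → M) (i : ℕ), D m t i = Nat.choose i m • t (i - m)) :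
    A (D n s) - D n (A s) = if n = 0 then 0 else D (n - 1) s := by
  have hD' : D = adjDivDeriv := by
    funext m t i
    exact hD m t i
  subst hD'
  funext i
  have hscalar : adjDivDeriv n (A s) i =
      adjDivDeriv n (fun j => s (j + 1)) i - α • adjDivDeriv n s i := by
    simp only [adjDivDeriv, hA, smul_sub, smul_comm α]
  rw [Pi.sub_apply, hA, hscalar, sub_sub_sub_cancel_right]
  rcases n with _ | m
  · simp [adjDivDeriv_zero]
  · simp only [Nat.add_one_ne_zero, if_false, Nat.add_sub_cancel]
    exact adjDivDeriv_succ_apply_succ_sub_adjDivDeriv_shift m i s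
end

section
/- Let α ∈ k, n ∈ ℕ, and s(α,n) = Dⁿ(s(α)) where s(α)ᵢ = αⁱ. If a ≤ n, then (L − α)^a (s(α,n)) = s(α, n−a). -/
/-- The paper's `s(α, m) = Dᵐ(s(α))`. -/
def binomSeq {k : Type*} [CommRing k] (α : k) (m : ℕ) (i : ℕ) : k :=
  (i.choose m : k) * α ^ (i - m)

-- Pascal's rule `C(i+1, m+1) = C(i, m) + C(i, m+1)`, read off after factoring out `α^(i - m)`.
theorem binomSeq_succ_sub_mul {k : Type*} [CommRing k] (α : k) (m i : ℕ) :
    binomSeq α (m + 1) (i + 1) - α * binomSeq α (m + 1) i = binomSeq α m i := by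
  obtain hi | ⟨j, rfl⟩ : i < m ∨ ∃ j, i = m + j :=
    (lt_or_ge i m).imp_right Nat.exists_eq_add_of_le
  · simp [binomSeq, Nat.choose_eq_zero_of_lt, hi, Nat.lt_succ_of_lt hi, (by omega : i + 1 < m + 1)]
  cases j with
  | zero => simp [binomSeq]
  | succ j =>
    have h₁ : m + (j + 1) - m = j + 1 := by omega
    have h₂ : m + (j + 1) - (m + 1) = j := by omega
    simp only [binomSeq, Nat.succ_sub_succ, h₁, h₂, Nat.choose_succ_succ', Nat.cast_add]
    ring

theorem stmt_11_general (k : Type*) [CommRing k] (α : k) (n a : ℕ) (h : a ≤ n)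
    (T : (ℕ → k) → (ℕ → k)) (hT : ∀ (t : ℕ → k) (i : ℕ), T t i = t (i + 1) - α * t i)
    (s : ℕ → ℕ → k) (hs : ∀ (m i : ℕ), s m i = (Nat.choose i m : k) * α ^ (i - m)) :
    T^[a] (s n) = s (n - a) := by
  have hs : s = binomSeq α := funext₂ hs
  have hT_succ (m : ℕ) : T (s (m + 1)) = s m := by
    funext i
    rw [hT, hs, binomSeq_succ_sub_mul]
  obtain ⟨m, rfl⟩ : ∃ m, n = m + a := ⟨n - a, by omega⟩
  rw [Nat.add_sub_cancel]
  induction a with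
  | zero => rfl
  | succ a ih => rw [Function.iterate_succ_apply, ← add_assoc, hT_succ, ih (by omega)]

/-- If `a ≤ n` then `(L − α)^a (s(α,n)) = s(α, n−a)`, where
`s(α,n)ᵢ = C(i,n)·α^(i−n)` and `L` is the left shift. -/
theorem stmt_11 (k : Type*) [CommRing k] [IsDomain k] (α : k) (n a : ℕ) (h : a ≤ n)
    (T : (ℕ → k) → (ℕ → k)) (hT : ∀ (t : ℕ → k) (i : ℕ), T t i = t (i + 1) - α * t i)
    (s : ℕ → ℕ → k) (hs : ∀ (m i : ℕ), s m i = (Nat.choose i m : k) * α ^ (i - m)) :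
    T^[a] (s n) = s (n - a) :=
  stmt_11_general k α n a h T hT s hs
end

section
/- Let p(x) be a monic polynomial over an entire ring k and α ∈ k a root of p of multiplicity μ, i.e. p(x) = (x−α)^μ q(x) with q(α) ≠ 0. Then for each a with 0 ≤ a ≤ μ−1, the sequence s(α,a) with s(α,a)ᵢ = C(i,a)·α^(i−a) satisfies p(L)(s(α,a)) = 0, where L is the left shift on sequences in k. -/
/-- The left shift operator on sequences, as a `k`-linear endomorphism. -/
def shiftOp (k : Type*) [CommRing k] : Module.End k (ℕ → k) where
  toFun s := fun i => s (i + 1)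
  map_add' _ _ := rfl
  map_smul' _ _ := rfl

/-!
Writing `L` for the shift, `L - α` lowers the index `a` of the sequence `s(α,a)ᵢ = C(i,a)·α^(i-a)`
by one (Pascal's rule) and kills `s(α,0) = (αⁱ)ᵢ`. Hence `(L - α)^(a+1)` annihilates `s(α,a)`,
and so does every polynomial in `L` divisible by `(X - α)^(a+1)`, in particular `p(L)` when `a < μ`.
-/

open Polynomial

section

variable {k : Type*} [CommRing k]

@[simp]
lemma shiftOp_apply (s : ℕ → k) (i : ℕ) : shiftOp k s i = s (i + 1) := rfl

/-- The paper's `s(α,a)`; for `i < a` the truncated `i - a` is harmless since `C(i,a) = 0`. -/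
def binomPowSeq (α : k) (a : ℕ) : ℕ → k := fun i => (i.choose a : k) * α ^ (i - a)

lemma shiftOp_sub_algebraMap_binomPowSeq_zero (α : k) :
    (shiftOp k - algebraMap k (Module.End k (ℕ → k)) α) (binomPowSeq α 0) = 0 := by
  funext i
  simp [binomPowSeq, Module.algebraMap_end_apply, pow_succ, mul_comm]

lemma shiftOp_sub_algebraMap_binomPowSeq_succ (α : k) (a : ℕ) :
    (shiftOp k - algebraMap k (Module.End k (ℕ → k)) α) (binomPowSeq α (a + 1)) =
      binomPowSeq α a := by
  funext i
  simp only [LinearMap.sub_apply, Pi.sub_apply, Module.algebraMap_end_apply, Pi.smul_apply,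
    smul_eq_mul, shiftOp_apply, binomPowSeq, Nat.choose_succ_succ', Nat.cast_add]
  rcases lt_or_ge i (a + 1) with hi | hi
  · rw [Nat.choose_eq_zero_of_lt hi, show i + 1 - (a + 1) = i - a by omega]
    ring
  · obtain ⟨j, rfl⟩ := Nat.exists_eq_add_of_le hi
    rw [show a + 1 + j + 1 - (a + 1) = j + 1 by omega, show a + 1 + j - (a + 1) = j by omega,
      show a + 1 + j - a = j + 1 by omega]
    ring

lemma aeval_shiftOp_X_sub_C_pow_binomPowSeq (α : k) (a : ℕ) :
    aeval (shiftOp k) ((X - C α) ^ (a + 1)) (binomPowSeq α a) = 0 := by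
  rw [map_pow, map_sub, aeval_X, aeval_C]
  induction a with
  | zero => simpa using shiftOp_sub_algebraMap_binomPowSeq_zero α
  | succ a ih => rw [pow_succ, Module.End.mul_apply, shiftOp_sub_algebraMap_binomPowSeq_succ, ih]

lemma aeval_shiftOp_binomPowSeq_eq_zero_of_dvd {p : k[X]} {α : k} {a : ℕ}
    (hdvd : (X - C α) ^ (a + 1) ∣ p) : aeval (shiftOp k) p (binomPowSeq α a) = 0 := by
  obtain ⟨r, rfl⟩ := hdvd
  rw [mul_comm, map_mul, Module.End.mul_apply, aeval_shiftOp_X_sub_C_pow_binomPowSeq, map_zero]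

end

theorem stmt_18_general (k : Type*) [CommRing k] (p q : Polynomial k)
    (α : k) (μ : ℕ) (hμ : 1 ≤ μ)
    (hfac : p = (Polynomial.X - Polynomial.C α) ^ μ * q)
    (a : ℕ) (ha : a ≤ μ - 1) :
    Polynomial.aeval (shiftOp k) p
      (fun i => (Nat.choose i a : k) * α ^ (i - a)) = 0 := by
  refine aeval_shiftOp_binomPowSeq_eq_zero_of_dvd ?_
  rw [hfac]
  exact (pow_dvd_pow _ (by omega)).mul_right q

/-- If `α` is a root of the monic polynomial `p` of multiplicity `μ`, then for
`0 ≤ a ≤ μ−1` the sequence `s(α,a)ᵢ = C(i,a)·α^(i−a)` lies in `ker p(L)`. -/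
theorem stmt_18 (k : Type*) [CommRing k] [IsDomain k] (p q : Polynomial k)
    (hmonic : p.Monic) (α : k) (μ : ℕ) (hμ : 1 ≤ μ)
    (hfac : p = (Polynomial.X - Polynomial.C α) ^ μ * q)
    (hq : q.eval α ≠ 0) (a : ℕ) (ha : a ≤ μ - 1) :
    Polynomial.aeval (shiftOp k) p
      (fun i => (Nat.choose i a : k) * α ^ (i - a)) = 0 :=
  stmt_18_general k p q α μ hμ hfac a ha
end

section
/- Let p(x) be a monic polynomial over an entire ring k all of whose roots lie in k: p(x) = (x−α₁)^{μ₁}···(x−α_k)^{μ_k} with α₁,…,α_k distinct and μ_u ≥ 1. Then the sequences s(α_u, a) with s(α_u,a)ᵢ = C(i,a)·α_u^(i−a), for 1 ≤ u ≤ k and 0 ≤ a ≤ μ_u−1, are linearly independent over k and generate a free k-submodule S of ker p(L) of rank deg p; furthermore the quotient (ker p(L))/S is a torsion k-module, and if k is a field then S = ker p(L). -/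
/-- The sequence `s(α,a)ᵢ = C(i,a)·α^(i−a)`. -/
def divGeomSeq {k : Type*} [CommRing k] (α : k) (a : ℕ) : ℕ → k :=
  fun i => (Nat.choose i a : k) * α ^ (i - a)

open Polynomial Module Submodule

theorem LinearIndependent.exists_smul_mem_span_of_finrank_le {R M ι : Type*} [CommRing R]
    [StrongRankCondition R] [AddCommGroup M] [Module R M] [Fintype ι] {v : ι → M}
    (hv : LinearIndependent R v) {W : Submodule R M} [Module.Finite R W] (hvW : ∀ i, v i ∈ W)
    (hW : finrank R W ≤ Fintype.card ι) {x : M} (hx : x ∈ W) :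
    ∃ a : R, a ≠ 0 ∧ a • x ∈ span R (Set.range v) := by
  let w : Option ι → M := fun o => o.elim x v
  have hwW : ∀ o, w o ∈ W := fun o => by cases o <;> simp [w, hx, hvW]
  have hw : ¬ LinearIndependent R w := fun h => by
    have := (LinearIndependent.of_comp W.subtype (v := fun o => ⟨w o, hwW o⟩) h)
      |>.fintype_card_le_finrank
    rw [Fintype.card_option] at this
    omega
  obtain ⟨g, hg, o, ho⟩ := Fintype.not_linearIndependent_iff.1 hw
  rw [Fintype.sum_option] at hg
  change g none • x + ∑ i, g (some i) • v i = 0 at hg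
  refine ⟨g none, fun h0 => ?_, ?_⟩
  · rw [h0, zero_smul, zero_add] at hg
    cases o with
    | none => exact ho h0
    | some i => exact ho (Fintype.linearIndependent_iff.1 hv _ hg i)
  · rw [eq_neg_of_add_eq_zero_left hg]
    exact neg_mem (sum_mem fun i _ => smul_mem _ _ (subset_span ⟨i, rfl⟩))

section shiftOp

variable {k : Type*} [CommRing k]

theorem shiftOp_pow_apply (m : ℕ) (s : ℕ → k) (n : ℕ) :
    (shiftOp k ^ m) s n = s (n + m) := by
  induction m generalizing s n with
  | zero => rfl
  | succ m ih => rw [pow_succ, Module.End.mul_apply, ih]; rfl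

theorem aeval_shiftOp_apply (p : k[X]) (s : ℕ → k) (n : ℕ) :
    aeval (shiftOp k) p s n = ∑ i ∈ Finset.range (p.natDegree + 1), p.coeff i * s (n + i) := by
  simp [aeval_eq_sum_range, shiftOp_pow_apply]

theorem aeval_shiftOp_X_sub_C (α : k) : aeval (shiftOp k) (X - C α) = shiftOp k - α • 1 := by
  simp [Algebra.algebraMap_eq_smul_one]

theorem Polynomial.Monic.ker_aeval_shiftOp {p : k[X]} (hp : p.Monic) :
    LinearMap.ker (aeval (shiftOp k) p)
      = (LinearRecurrence.mk p.natDegree fun i => -p.coeff i).solSpace := by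
  ext s
  rw [LinearMap.mem_ker, ← LinearRecurrence.is_sol_iff_mem_solSpace, funext_iff]
  refine forall_congr' fun n => ?_
  rw [aeval_shiftOp_apply, Finset.sum_range_succ, hp.coeff_natDegree, one_mul,
    Fin.sum_univ_eq_sum_range (fun i => -p.coeff i * s (n + i))]
  simp only [Pi.zero_apply, neg_mul, Finset.sum_neg_distrib]
  constructor <;> intro h <;> linear_combination h

noncomputable def Polynomial.Monic.kerAevalShiftOpEquiv {p : k[X]} (hp : p.Monic) :
    LinearMap.ker (aeval (shiftOp k) p) ≃ₗ[k] (Fin p.natDegree → k) :=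
  (LinearEquiv.ofEq _ _ hp.ker_aeval_shiftOp).trans (LinearRecurrence.toInit _)

end shiftOp

section divGeomSeq

variable {k : Type*} [CommRing k]

theorem shiftOp_sub_smul_divGeomSeq_succ (α : k) (a : ℕ) :
    (shiftOp k - α • 1) (divGeomSeq α (a + 1)) = divGeomSeq α a := by
  funext n
  change (n + 1).choose (a + 1) * α ^ (n + 1 - (a + 1))
      - α * (n.choose (a + 1) * α ^ (n - (a + 1))) = n.choose a * α ^ (n - a)
  rcases lt_trichotomy n a with h | rfl | h
  · simp [Nat.choose_eq_zero_of_lt, h, h.trans (Nat.lt_succ_self a)]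
  · simp
  · obtain ⟨j, rfl⟩ := Nat.exists_eq_add_of_lt h
    rw [Nat.choose_succ_succ', show a + j + 1 + 1 - (a + 1) = j + 1 by omega,
      show a + j + 1 - (a + 1) = j by omega, show a + j + 1 - a = j + 1 by omega]
    push_cast
    ring

theorem shiftOp_sub_smul_divGeomSeq_zero (α : k) :
    (shiftOp k - α • 1) (divGeomSeq α 0) = 0 := by
  funext n
  change (n + 1).choose 0 * α ^ (n + 1 - 0) - α * (n.choose 0 * α ^ (n - 0)) = 0
  simp [pow_succ, mul_comm]

theorem shiftOp_sub_smul_pow_divGeomSeq_of_lt (α : k) {a m : ℕ} (h : a < m) :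
    ((shiftOp k - α • 1) ^ m) (divGeomSeq α a) = 0 := by
  obtain ⟨j, rfl⟩ := Nat.exists_eq_add_of_lt h
  clear h
  induction a with
  | zero => rw [pow_succ, Module.End.mul_apply, shiftOp_sub_smul_divGeomSeq_zero, map_zero]
  | succ a ih =>
    rw [show a + 1 + j + 1 = a + j + 1 + 1 by omega, pow_succ, Module.End.mul_apply,
      shiftOp_sub_smul_divGeomSeq_succ, ih]

theorem divGeomSeq_mem_genEigenspace (α : k) (a : ℕ) :
    divGeomSeq α a ∈ (shiftOp k).genEigenspace α ((a + 1 : ℕ) : ℕ∞) := by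
  rw [Module.End.mem_genEigenspace_nat, LinearMap.mem_ker]
  exact shiftOp_sub_smul_pow_divGeomSeq_of_lt α (Nat.lt_succ_self a)

/-- Triangularity: `divGeomSeq α a` vanishes below index `a` and is `1` at `a`. -/
theorem linearIndependent_divGeomSeq (α : k) : LinearIndependent k (divGeomSeq α) := by
  rw [linearIndependent_iff']
  intro s g hg i
  induction i using Nat.strong_induction_on with
  | _ i ih =>
    intro hi
    have hgi := congrFun hg i
    rw [Finset.sum_apply, Finset.sum_eq_single i] at hgi
    · simpa [divGeomSeq] using hgi
    · intro b hb hbi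
      rcases lt_or_gt_of_ne hbi with h | h
      · simp [ih b h hb]
      · simp [divGeomSeq, Nat.choose_eq_zero_of_lt h]
    · exact fun h => absurd hi h

end divGeomSeq

section roots

variable {k : Type*} [CommRing k] {K : ℕ} (α : Fin K → k) (μ : Fin K → ℕ)

theorem linearIndependent_divGeomSeq_sigma [IsDomain k] (hα : Function.Injective α) :
    LinearIndependent k fun ua : Σ u, Fin (μ u) => divGeomSeq (α ua.1) ua.2 := by
  have hW := (Module.End.independent_maxGenEigenspace (shiftOp k)).comp hα
  have hle : ∀ u, span k (Set.range fun a : Fin (μ u) => divGeomSeq (α u) a)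
      ≤ (shiftOp k).maxGenEigenspace (α u) := fun u =>
    span_le.2 <| Set.range_subset_iff.2 fun a =>
      (shiftOp k).genEigenspace_le_maximal _ _ (divGeomSeq_mem_genEigenspace _ _)
  refine linearIndependent_iUnion_finite
    (fun u => (linearIndependent_divGeomSeq (α u)).comp _ Fin.val_injective)
    fun u t _ hu => (hW.disjoint_biSup hu).mono (hle u) (iSup₂_mono fun v _ => hle v)

theorem divGeomSeq_mem_ker_aeval_prod (u : Fin K) {a : ℕ} (ha : a < μ u) :
    divGeomSeq (α u) a ∈ LinearMap.ker (aeval (shiftOp k) (∏ v, (X - C (α v)) ^ μ v)) := by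
  obtain ⟨q, hq⟩ := Finset.dvd_prod_of_mem (fun v => (X - C (α v)) ^ μ v) (Finset.mem_univ u)
  rw [LinearMap.mem_ker, hq, mul_comm, map_mul, map_pow, aeval_shiftOp_X_sub_C,
    Module.End.mul_apply, shiftOp_sub_smul_pow_divGeomSeq_of_lt _ ha, map_zero]

theorem monic_prod_X_sub_C_pow : (∏ u, (X - C (α u)) ^ μ u).Monic :=
  monic_prod_of_monic _ _ fun u _ => (monic_X_sub_C (α u)).pow (μ u)

theorem natDegree_prod_X_sub_C_pow [Nontrivial k] :
    (∏ u, (X - C (α u)) ^ μ u).natDegree = ∑ u, μ u := by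
  rw [natDegree_prod_of_monic _ _ fun u _ => (monic_X_sub_C (α u)).pow (μ u)]
  refine Finset.sum_congr rfl fun u _ => ?_
  rw [(monic_X_sub_C (α u)).natDegree_pow, natDegree_X_sub_C, mul_one]

end roots

theorem stmt_19_general (k : Type*) [CommRing k] [IsDomain k] (K : ℕ) (α : Fin K → k)
    (μ : Fin K → ℕ) (hα : Function.Injective α)
    (p : Polynomial k)
    (hp : p = ∏ u, (Polynomial.X - Polynomial.C (α u)) ^ μ u) :
    LinearIndependent k
        (fun ua : Σ u : Fin K, Fin (μ u) => divGeomSeq (α ua.1) (ua.2 : ℕ)) ∧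
    (∀ ua : Σ u : Fin K, Fin (μ u),
        divGeomSeq (α ua.1) (ua.2 : ℕ)
          ∈ LinearMap.ker (Polynomial.aeval (shiftOp k) p)) ∧
    Fintype.card (Σ u : Fin K, Fin (μ u)) = p.natDegree ∧
    (∀ s ∈ LinearMap.ker (Polynomial.aeval (shiftOp k) p), ∃ x : k, x ≠ 0 ∧
        x • s ∈ Submodule.span k
          (Set.range (fun ua : Σ u : Fin K, Fin (μ u) =>
            divGeomSeq (α ua.1) (ua.2 : ℕ)))) ∧
    (IsField k →
      Submodule.span k
          (Set.range (fun ua : Σ u : Fin K, Fin (μ u) =>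
            divGeomSeq (α ua.1) (ua.2 : ℕ)))
        = LinearMap.ker (Polynomial.aeval (shiftOp k) p)) := by
  subst hp
  have hind := linearIndependent_divGeomSeq_sigma α μ hα
  have hmem : ∀ ua : Σ u, Fin (μ u), divGeomSeq (α ua.1) ua.2 ∈ _ := fun ua =>
    divGeomSeq_mem_ker_aeval_prod α μ ua.1 ua.2.isLt
  have hcard : Fintype.card (Σ u, Fin (μ u)) = (∏ u, (X - C (α u)) ^ μ u).natDegree := by
    rw [natDegree_prod_X_sub_C_pow]
    simp
  let e := (monic_prod_X_sub_C_pow α μ).kerAevalShiftOpEquiv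
  have : Module.Finite k (LinearMap.ker (aeval (shiftOp k) (∏ u, (X - C (α u)) ^ μ u))) :=
    .equiv e.symm
  have htors := fun s (hs : s ∈ LinearMap.ker _) =>
    hind.exists_smul_mem_span_of_finrank_le hmem (by simp [e.finrank_eq, hcard]) hs
  refine ⟨hind, hmem, hcard, htors, fun hk =>
    le_antisymm (span_le.2 (Set.range_subset_iff.2 hmem)) fun s hs => ?_⟩
  obtain ⟨a, ha, has⟩ := htors s hs
  obtain ⟨b, hb⟩ := hk.mul_inv_cancel ha
  simpa [smul_smul, mul_comm b, hb] using smul_mem _ b has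

/-- For a monic polynomial `p = ∏ (x−α_u)^{μ_u}` with all roots in `k`, the
sequences `s(α_u, a)`, `0 ≤ a ≤ μ_u−1`, are linearly independent, lie in
`ker p(L)`, span a free submodule `S` of rank `deg p`, the quotient
`(ker p(L))/S` is torsion, and `S = ker p(L)` when `k` is a field. -/
theorem stmt_19 (k : Type*) [CommRing k] [IsDomain k] (K : ℕ) (α : Fin K → k)
    (μ : Fin K → ℕ) (hμ : ∀ u, 1 ≤ μ u) (hα : Function.Injective α)
    (p : Polynomial k)
    (hp : p = ∏ u, (Polynomial.X - Polynomial.C (α u)) ^ μ u) :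
    LinearIndependent k
        (fun ua : Σ u : Fin K, Fin (μ u) => divGeomSeq (α ua.1) (ua.2 : ℕ)) ∧
    (∀ ua : Σ u : Fin K, Fin (μ u),
        divGeomSeq (α ua.1) (ua.2 : ℕ)
          ∈ LinearMap.ker (Polynomial.aeval (shiftOp k) p)) ∧
    Fintype.card (Σ u : Fin K, Fin (μ u)) = p.natDegree ∧
    (∀ s ∈ LinearMap.ker (Polynomial.aeval (shiftOp k) p), ∃ x : k, x ≠ 0 ∧
        x • s ∈ Submodule.span k
          (Set.range (fun ua : Σ u : Fin K, Fin (μ u) =>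
            divGeomSeq (α ua.1) (ua.2 : ℕ)))) ∧
    (IsField k →
      Submodule.span k
          (Set.range (fun ua : Σ u : Fin K, Fin (μ u) =>
            divGeomSeq (α ua.1) (ua.2 : ℕ)))
        = LinearMap.ker (Polynomial.aeval (shiftOp k) p)) :=
  stmt_19_general k K α μ hα p hp
end
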